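/- Consider tournament selection with tournament size μ over a population of size μ ≥ 3 sorted by non-increasing diversity contribution, and suppose among the top three ranked individuals there is a good individual. Then the probability of selecting a good individual is at least (1 − (1 − 1/(μ−2))^{μ}) · (1 − 2/μ)^{μ} ≥ (1 − 1/e) · (0.19)², a constant independent of μ. -/

import Mathlib

/-!
Let `i < 3` be a good rank and `A` the other two of the top three ranks. Every tournament that
draws no rank of `A` but draws `i` at least once is won by `i`; there are
`(μ - 2)^μ - (μ - 3)^μ` of them, a fraction `(1 - (1 - 1/(μ-2))^μ) (1 - 2/μ)^μ` of all `μ^μ`.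
The first factor is at least `1 - 1/e` because `1 - x ≤ e^{-x}`; the second is at least `e^{-3}`
for `μ ≥ 6`, since `1 - 2/μ ≥ e^{-2/(μ-2)}`, and is checked directly for `μ = 3, 4, 5`.
-/

noncomputable section
open scoped ENNReal
attribute [local instance] Classical.propDecidable

namespace EMO


/-- A bit string of length `n`. -/
abbrev BitString (n : ℕ) := Fin n → Bool

/-- Number of one-bits. -/
def onesCount {n : ℕ} (x : BitString n) : ℕ :=
  (Finset.univ.filter fun i => x i = true).card

def allOnes (n : ℕ) : BitString n := fun _ => true
def allZeros (n : ℕ) : BitString n := fun _ => false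

/-- The bi-objective function OneMinMax. -/
def OneMinMax {n : ℕ} (x : BitString n) : ℤ × ℤ :=
  ((onesCount x : ℤ), (n : ℤ) - (onesCount x : ℤ))

/-- Number of leading ones. -/
def leadingOnes {n : ℕ} (x : BitString n) : ℕ :=
  (Finset.univ.filter fun i : Fin n => ∀ j : Fin n, j ≤ i → x j = true).card

/-- Number of trailing zeros. -/
def trailingZeros {n : ℕ} (x : BitString n) : ℕ :=
  (Finset.univ.filter fun i : Fin n => ∀ j : Fin n, i ≤ j → x j = false).card

/-- The bi-objective function LOTZ. -/
def LOTZ {n : ℕ} (x : BitString n) : ℤ × ℤ :=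
  ((leadingOnes x : ℤ), (trailingZeros x : ℤ))

/-- `y` dominates `x` (maximisation). -/
def dominates {n : ℕ} (f : BitString n → ℤ × ℤ) (y x : BitString n) : Prop :=
  (f x).1 ≤ (f y).1 ∧ (f x).2 ≤ (f y).2 ∧ f x ≠ f y

/-- `y` weakly dominates `x` (maximisation). -/
def weaklyDominates {n : ℕ} (f : BitString n → ℤ × ℤ) (y x : BitString n) : Prop :=
  (f x).1 ≤ (f y).1 ∧ (f x).2 ≤ (f y).2

/-- Pareto optimality. -/
def paretoOptimal {n : ℕ} (f : BitString n → ℤ × ℤ) (x : BitString n) : Prop :=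
  ¬ ∃ y : BitString n, dominates f y x

/-- A population of mutually non-dominated points. -/
def mutuallyNonDominated {n : ℕ} (f : BitString n → ℤ × ℤ)
    (P : Finset (BitString n)) : Prop :=
  ∀ x ∈ P, ∀ y ∈ P, ¬ dominates f y x

/-- Flip bit `i` of `x`. -/
def flipBit {n : ℕ} (x : BitString n) (i : Fin n) : BitString n :=
  Function.update x i (!x i)

/-- `y` is a Hamming neighbour of `x`. -/
def hammingNeighbour {n : ℕ} (x y : BitString n) : Prop :=
  ∃ i : Fin n, y = flipBit x i

/-- `x` is good relative to population `P`: it is Pareto optimal and has a Pareto-optimal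
Hamming neighbour whose objective vector is not attained by any member of `P`. -/
def isGood {n : ℕ} (f : BitString n → ℤ × ℤ) (P : Finset (BitString n))
    (x : BitString n) : Prop :=
  paretoOptimal f x ∧
    ∃ y : BitString n, hammingNeighbour x y ∧ paretoOptimal f y ∧ ∀ z ∈ P, f z ≠ f y

/-- `x` is bad relative to population `P`. -/
def isBad {n : ℕ} (f : BitString n → ℤ × ℤ) (P : Finset (BitString n))
    (x : BitString n) : Prop :=
  paretoOptimal f x ∧
    ¬ ∃ y : BitString n, hammingNeighbour x y ∧ paretoOptimal f y ∧ ∀ z ∈ P, f z ≠ f y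

/-- `P` covers the whole Pareto front of `f`. -/
def coversFront {n : ℕ} (f : BitString n → ℤ × ℤ) (P : Finset (BitString n)) : Prop :=
  ∀ x : BitString n, paretoOptimal f x → ∃ z ∈ P, f z = f x

/-- The hypervolume contribution of `x` to `P` (for a population of mutually
non-dominated points, with reference point `r`). -/
def HVC {n : ℕ} (f : BitString n → ℤ × ℤ) (r : ℤ × ℤ) (x : BitString n)
    (P : Finset (BitString n)) : ℤ :=
  ((f x).1 - (((P.filter fun z => (f z).1 < (f x).1).image fun z => (f z).1).max.unbotD r.1)) *
  ((f x).2 - (((P.filter fun z => (f z).2 < (f x).2).image fun z => (f z).2).max.unbotD r.2))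

/-- Crowding distance of `x` in `P` with respect to a single objective `g`: infinite for the
boundary points, and otherwise the normalised difference between successor and predecessor. -/
def CDCobj {n : ℕ} (g : BitString n → ℤ) (x : BitString n)
    (P : Finset (BitString n)) : ℝ≥0∞ :=
  if (∀ z ∈ P, g x ≤ g z) ∨ (∀ z ∈ P, g z ≤ g x) then ⊤
  else
    (((((P.filter fun z => g x < g z).image g).min.untopD 0 -
        (((P.filter fun z => g z < g x).image g).max.unbotD 0)).toNat : ℝ≥0∞)) /
      ((((P.image g).max.unbotD 0 - ((P.image g).min.untopD 0)).toNat : ℝ≥0∞))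

/-- The crowding distance contribution of `x` to `P`. -/
def CDC {n : ℕ} (f : BitString n → ℤ × ℤ) (x : BitString n)
    (P : Finset (BitString n)) : ℝ≥0∞ :=
  CDCobj (fun z => (f z).1) x P + CDCobj (fun z => (f z).2) x P

/-- A diversity measure `c` is diversity-favouring on `S`. -/
def diversityFavouring {n : ℕ} {α : Type*} [Preorder α] (f : BitString n → ℤ × ℤ)
    (c : BitString n → Finset (BitString n) → α) (S : Set (BitString n)) : Prop :=
  ∀ P : Finset (BitString n), mutuallyNonDominated f P →
    ∀ x ∈ P, ∀ y ∈ P, x ∈ S → y ∈ S → isBad f P x → isGood f P y → c x P < c y P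

/-- The default bit string (used only to make selection kernels total). -/
def defaultBS (n : ℕ) : BitString n := fun _ => false

/-- Local mutation: flip a single uniformly random bit. -/
def localMutation {n : ℕ} (hn : 0 < n) (x : BitString n) : PMF (BitString n) :=
  haveI : Nonempty (Fin n) := ⟨⟨0, hn⟩⟩
  (PMF.uniformOfFintype (Fin n)).map (flipBit x)

/-- A Bernoulli coin with success probability `1/n` (for `n ≥ 1`). -/
def bitFlipCoin (n : ℕ) : PMF Bool :=
  PMF.bernoulli (min ((n : ℝ≥0∞))⁻¹ 1).toNNReal
    (le_trans (ENNReal.toNNReal_mono ENNReal.one_ne_top (min_le_right _ _)) ENNReal.toNNReal_one.le)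

/-- Global (standard bit) mutation: flip each bit independently with probability `1/n`. -/
def globalMutationAux {n : ℕ} : List (Fin n) → BitString n → PMF (BitString n)
  | [], x => PMF.pure x
  | i :: is, x => (bitFlipCoin n).bind fun b =>
      globalMutationAux is (if b then flipBit x i else x)

def globalMutation {n : ℕ} (x : BitString n) : PMF (BitString n) :=
  globalMutationAux (List.finRange n) x

/-- Survival selection: if `s'` is not dominated by any member of `P`, add `s'` to `P` and
remove all members weakly dominated by `s'`. -/
def updatePop {n : ℕ} (f : BitString n → ℤ × ℤ) (P : Finset (BitString n))
    (s' : BitString n) : Finset (BitString n) :=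
  if ∃ z ∈ P, dominates f z s' then P
  else insert s' (P.filter fun z => ¬ weaklyDominates f s' z)

/-- One iteration of (G)SEMO with parent-selection kernel `select` and mutation `mutate`. -/
def step {n : ℕ} (f : BitString n → ℤ × ℤ)
    (select : Finset (BitString n) → PMF (BitString n))
    (mutate : BitString n → PMF (BitString n))
    (P : Finset (BitString n)) : PMF (Finset (BitString n)) :=
  (select P).bind fun s => (mutate s).map fun s' => updatePop f P s'

/-- The L-dominant attribute `L(x) = LO(x) + TZ(x)`. -/
def Ldom {n : ℕ} (x : BitString n) : ℕ := leadingOnes x + trailingZeros x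

/-- The subpopulation of points with maximum L-dominant attribute. -/
def maxLSub {n : ℕ} (P : Finset (BitString n)) : Finset (BitString n) :=
  P.filter fun x => ∀ z ∈ P, Ldom z ≤ Ldom x

/-- One iteration of the modified GSEMO: parent selection (and the diversity contribution)
is restricted to the subpopulation of points with maximum L-dominant attribute. -/
def stepMod {n : ℕ} (f : BitString n → ℤ × ℤ)
    (select : Finset (BitString n) → PMF (BitString n))
    (mutate : BitString n → PMF (BitString n))
    (P : Finset (BitString n)) : PMF (Finset (BitString n)) :=
  (select (maxLSub P)).bind fun s => (mutate s).map fun s' => updatePop f P s'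

/-- Initial population: a single uniformly random bit string. -/
def initDist (n : ℕ) : PMF (Finset (BitString n)) :=
  (PMF.uniformOfFintype (BitString n)).map fun x => {x}

/-- Distribution of the population after `t` iterations. -/
def stateDist {S : Type*} (init : PMF S) (st : S → PMF S) : ℕ → PMF S
  | 0 => init
  | t + 1 => (stateDist init st t).bind st

/-- Expected number of iterations until an (absorbing) goal predicate is reached,
expressed as `∑ₜ Pr[goal not yet reached at time t]`. -/
def expectedRuntime {S : Type*} (init : PMF S) (st : S → PMF S) (goal : S → Prop) : ℝ≥0∞ :=
  ∑' t : ℕ, (stateDist init st t).toOuterMeasure {s | ¬ goal s}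

/-- Uniform parent selection. -/
def uniformSelect {n : ℕ} (P : Finset (BitString n)) : PMF (BitString n) :=
  if h : P.Nonempty then PMF.uniformOfFinset P h else PMF.pure (defaultBS n)

/-- Highest Diversity Contribution (HDC) parent selection: select an individual with
maximum diversity contribution, ties broken uniformly at random. -/
def HDCSelect {n : ℕ} {α : Type*} [LinearOrder α]
    (c : BitString n → Finset (BitString n) → α)
    (P : Finset (BitString n)) : PMF (BitString n) :=
  if h : P.Nonempty then
    PMF.uniformOfFinset (P.filter fun x => ∀ y ∈ P, c y P ≤ c x P)
      (by
        obtain ⟨b, hb, hmax⟩ := P.exists_max_image (fun x => c x P) h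
        exact ⟨b, Finset.mem_filter.mpr ⟨hb, hmax⟩⟩)
  else PMF.pure (defaultBS n)

/-- Non-Minimum Uniform at Random (NMUAR) parent selection: select uniformly at random
among all individuals whose diversity contribution is not minimal (from the whole
population if all contributions are equal). -/
def NMUARSelect {n : ℕ} {α : Type*} [LinearOrder α]
    (c : BitString n → Finset (BitString n) → α)
    (P : Finset (BitString n)) : PMF (BitString n) :=
  if h : P.Nonempty then
    if hQ : (P.filter fun x => ∃ y ∈ P, c y P < c x P).Nonempty then
      PMF.uniformOfFinset _ hQ
    else PMF.uniformOfFinset P h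
  else PMF.pure (defaultBS n)

/-- Tournament selection with tournament size `μ = |P|`: draw `μ` individuals uniformly at
random with replacement from `P` and select one with the highest diversity contribution
among the drawn multiset (ties broken uniformly at random). -/
def tournamentSelect {n : ℕ} {α : Type*} [LinearOrder α]
    (c : BitString n → Finset (BitString n) → α)
    (P : Finset (BitString n)) : PMF (BitString n) :=
  if h : P.Nonempty then
    haveI : Nonempty {x // x ∈ P} := h.to_subtype
    (PMF.uniformOfFintype (Fin P.card → {x // x ∈ P})).bind fun g =>
      PMF.uniformOfFinset
        ((Finset.univ.image fun i => ((g i : {x // x ∈ P}) : BitString n)).filter fun x =>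
          ∀ y ∈ Finset.univ.image fun i => ((g i : {x // x ∈ P}) : BitString n), c y P ≤ c x P)
        (by
          have hne : (Finset.univ.image fun i => ((g i : {x // x ∈ P}) : BitString n)).Nonempty := by
            refine ⟨(g ⟨0, Finset.card_pos.mpr h⟩ : {x // x ∈ P}), ?_⟩
            exact Finset.mem_image.mpr ⟨⟨0, Finset.card_pos.mpr h⟩, Finset.mem_univ _, rfl⟩
          obtain ⟨b, hb, hmax⟩ :=
            Finset.exists_max_image _ (fun x => c x P) hne
          exact ⟨b, Finset.mem_filter.mpr ⟨hb, hmax⟩⟩)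
  else PMF.pure (defaultBS n)

/-- Exponential ranking scheme: probability of selecting the `i`-th ranked individual
(1-indexed) in a population of size `μ`. -/
def rExp (i μ : ℕ) : ℝ≥0∞ :=
  (2 : ℝ≥0∞)⁻¹ ^ i / ∑ j ∈ Finset.Icc 1 μ, (2 : ℝ≥0∞)⁻¹ ^ j

/-- Power-law ranking scheme. -/
def rPow (i μ : ℕ) : ℝ≥0∞ :=
  ((i : ℝ≥0∞) ^ 2)⁻¹ / ∑ j ∈ Finset.Icc 1 μ, ((j : ℝ≥0∞) ^ 2)⁻¹

/-- Harmonic ranking scheme. -/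
def rHarm (i μ : ℕ) : ℝ≥0∞ :=
  (i : ℝ≥0∞)⁻¹ / ∑ j ∈ Finset.Icc 1 μ, (j : ℝ≥0∞)⁻¹


/-- `select` implements a rank-based parent-selection scheme with rank probabilities
`r i μ` (1-indexed rank `i`, population size `μ`) with respect to the diversity
contribution `c`, for some non-increasing ordering of the population by `c`. -/
def implementsRankScheme {n : ℕ} {α : Type*} [Preorder α]
    (c : BitString n → Finset (BitString n) → α) (r : ℕ → ℕ → ℝ≥0∞)
    (select : Finset (BitString n) → PMF (BitString n)) : Prop :=
  ∀ P : Finset (BitString n), P.Nonempty →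
    ∃ l : List (BitString n), l.Nodup ∧ l.toFinset = P ∧
      l.Chain' (fun a b => c b P ≤ c a P) ∧
      (∀ i : Fin l.length, select P (l.get i) = r (i.val + 1) P.card) ∧
      (∀ x : BitString n, x ∉ P → select P x = 0)

/-- The Pareto-optimal point `1^i 0^(n-i)` of LOTZ. -/
def opt (n i : ℕ) : BitString n := fun t => decide ((t : ℕ) < i)

/-- The whole Pareto set of LOTZ as a population. -/
def frontSet (n : ℕ) : Finset (BitString n) := (Finset.range (n + 1)).image (opt n)

/-- `P` has a gap at position `i`. -/
def hasGapAt {n : ℕ} (P : Finset (BitString n)) (i : ℕ) : Prop :=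
  opt n i ∉ P ∧ (∃ j, j < i ∧ opt n j ∈ P) ∧ (∃ k, i < k ∧ k ≤ n ∧ opt n k ∈ P)

/-- `P` has a gap at some position `i` with `n/4 ≤ i ≤ 3n/4`. -/
def gapInRange (n : ℕ) (P : Finset (BitString n)) : Prop :=
  ∃ i : ℕ, n ≤ 4 * i ∧ 4 * i ≤ 3 * n ∧ hasGapAt P i

/-- `P` contains both `0^n` and `1^n`. -/
def bothExtremes (n : ℕ) (P : Finset (BitString n)) : Prop :=
  allZeros n ∈ P ∧ allOnes n ∈ P

/-- The chain stopped (frozen) as soon as `cond` holds. -/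
def stopWhen {S : Type*} (cond : S → Prop) (st : S → PMF S) (s : S) : PMF S :=
  if cond s then PMF.pure s else st s

open Finset Fintype

section Tournament

variable {ι α : Type*} [Fintype ι] [DecidableEq ι]

lemma min_untopD_eq_of_isLeast [LinearOrder α] {s : Finset α} {a : α} (d : α)
    (h : IsLeast (s : Set α) a) :
    s.min.untopD d = a := by
  rw [le_antisymm (min_le h.1) (Finset.le_min fun b hb => WithTop.coe_le_coe.mpr (h.2 hb))]
  rfl

lemma mem_piFinset_sdiff_piFinset_erase [DecidableEq α] {T : Finset α} {a : α} {g : ι → α} :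
    g ∈ piFinset (fun _ : ι => T) \ piFinset (fun _ => T.erase a) ↔
      (∀ k, g k ∈ T) ∧ ∃ k, g k = a := by
  simp only [mem_sdiff, Fintype.mem_piFinset, mem_erase, not_forall, not_and_or, not_not]
  constructor
  · rintro ⟨hT, k, hk⟩
    exact ⟨hT, k, hk.resolve_right fun h => h (hT k)⟩
  · rintro ⟨hT, k, hk⟩
    exact ⟨hT, k, Or.inl hk⟩

lemma card_piFinset_sdiff_piFinset_erase [DecidableEq α] {T : Finset α} {a : α}
    (ha : a ∈ T) :
    #(piFinset (fun _ : ι => T) \ piFinset (fun _ => T.erase a)) =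
      #T ^ Fintype.card ι - (#T - 1) ^ Fintype.card ι := by
  rw [card_sdiff_of_subset (Fintype.piFinset_subset _ _ fun _ => erase_subset a T)]
  simp only [Fintype.card_piFinset, prod_const, card_univ, card_erase_of_mem ha]

lemma tournament_winner_eq [LinearOrder α] {T : Finset α} {a : α} (d : α)
    (hT : IsLeast (T : Set α) a) {g : ι → α}
    (hg : g ∈ piFinset (fun _ : ι => T) \ piFinset (fun _ => T.erase a)) :
    (univ.image g).min.untopD d = a := by
  obtain ⟨hgT, k, hk⟩ := mem_piFinset_sdiff_piFinset_erase.mp hg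
  refine min_untopD_eq_of_isLeast d ⟨?_, ?_⟩
  · exact mem_coe.mpr (mem_image.mpr ⟨k, mem_univ k, hk⟩)
  · rintro _ hb
    obtain ⟨l, -, rfl⟩ := mem_image.mp (mem_coe.mp hb)
    exact hT.2 (hgT l)

lemma card_pow_sub_div_le_tournament_win [LinearOrder α] [Fintype α] [Nonempty α] {T : Finset α}
    {a : α} (d : α) (hT : IsLeast (T : Set α) a) {G : Finset α} (haG : a ∈ G) :
    ((#T ^ Fintype.card ι - (#T - 1) ^ Fintype.card ι : ℕ) : ℝ≥0∞) /
        (Fintype.card α : ℝ≥0∞) ^ Fintype.card ι ≤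
      ((PMF.uniformOfFintype (ι → α)).map fun g =>
          (univ.image g).min.untopD d).toOuterMeasure ↑G := by
  set E := piFinset (fun _ : ι => T) \ piFinset (fun _ => T.erase a)
  have hE : (E : Set (ι → α)) ⊆ (fun g => (univ.image g).min.untopD d) ⁻¹' ↑G := by
    intro g hg
    simpa [tournament_winner_eq d hT (mem_coe.mp hg)] using haG
  calc _ = (PMF.uniformOfFintype (ι → α)).toOuterMeasure E := by
        rw [PMF.toOuterMeasure_apply_finset]
        simp only [E, PMF.uniformOfFintype_apply, sum_const, nsmul_eq_mul, Fintype.card_fun,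
          card_piFinset_sdiff_piFinset_erase hT.1, Nat.cast_pow, div_eq_mul_inv]
    _ ≤ _ := by
      rw [PMF.toOuterMeasure_map_apply]
      exact MeasureTheory.measure_mono hE

end Tournament

lemma card_compl_erase_top_three {μ : ℕ} (hμ : 3 ≤ μ) {i : Fin μ} (hi : (i : ℕ) < 3) :
    #(({j : Fin μ | (j : ℕ) < 3} : Finset (Fin μ)).erase i)ᶜ = μ - 2 := by
  rw [card_compl, Fintype.card_fin, card_erase_of_mem (by simpa using hi), Fin.card_filter_val_lt]
  omega

lemma isLeast_compl_erase_top_three {μ : ℕ} {i : Fin μ} (hi : (i : ℕ) < 3) :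
    IsLeast ↑(({j : Fin μ | (j : ℕ) < 3} : Finset (Fin μ)).erase i)ᶜ i := by
  refine ⟨by simp, fun j hj => ?_⟩
  simp only [coe_compl, coe_erase, coe_filter, mem_univ, true_and, Set.mem_compl_iff,
    Set.mem_diff, Set.mem_setOf_eq, Set.mem_singleton_iff, not_and, not_not] at hj
  by_cases hj3 : (j : ℕ) < 3
  · exact (hj hj3).ge
  · exact Fin.le_def.mpr (by omega)

lemma one_sub_one_sub_inv_pow_mul_eq {m : ℝ} (n : ℕ) (hm : m ≠ 0) (hm2 : m - 2 ≠ 0) :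
    (1 - (1 - 1 / (m - 2)) ^ n) * (1 - 2 / m) ^ n = ((m - 2) ^ n - (m - 3) ^ n) / m ^ n := by
  have h1 : 1 - 1 / (m - 2) = (m - 3) / (m - 2) := by field_simp; ring
  have h2 : 1 - 2 / m = (m - 2) / m := by field_simp
  rw [h1, h2, div_pow, div_pow]
  field_simp

lemma ofReal_tournament_bound_eq {μ : ℕ} (hμ : 3 ≤ μ) :
    ENNReal.ofReal ((1 - (1 - 1 / ((μ : ℝ) - 2)) ^ μ) * (1 - 2 / (μ : ℝ)) ^ μ) =
      (((μ - 2) ^ μ - (μ - 2 - 1) ^ μ : ℕ) : ℝ≥0∞) / (μ : ℝ≥0∞) ^ μ := by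
  have hμ' : (3 : ℝ) ≤ μ := by exact_mod_cast hμ
  have hcast : (((μ - 2) ^ μ - (μ - 2 - 1) ^ μ : ℕ) : ℝ) =
      ((μ : ℝ) - 2) ^ μ - ((μ : ℝ) - 3) ^ μ := by
    have h2 : ((μ - 2 : ℕ) : ℝ) = μ - 2 := by rw [Nat.cast_sub (by omega)]; norm_num
    have h3 : ((μ - 2 - 1 : ℕ) : ℝ) = μ - 3 := by rw [Nat.cast_sub (by omega), h2]; ring
    rw [Nat.cast_sub (Nat.pow_le_pow_left (by omega) μ), Nat.cast_pow, Nat.cast_pow, h2, h3]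
  rw [one_sub_one_sub_inv_pow_mul_eq μ (by positivity) (by linarith), ← hcast,
    ENNReal.ofReal_div_of_pos (by positivity), ENNReal.ofReal_natCast,
    ENNReal.ofReal_pow (by positivity), ENNReal.ofReal_natCast]

lemma one_sub_inv_pow_le_exp_neg_one {m : ℝ} {n : ℕ} (hm : 1 ≤ m) (hmn : m ≤ n) :
    (1 - 1 / m) ^ n ≤ Real.exp (-1) := by
  have hn : (0 : ℝ) < n := by linarith
  calc (1 - 1 / m) ^ n = (1 - n / m / n) ^ n := by rw [div_div_cancel_left' hn.ne', one_div]
    _ ≤ Real.exp (-(n / m)) := Real.one_sub_div_pow_le_exp_neg (div_le_self hn.le hm)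
    _ ≤ Real.exp (-1) := by
      gcongr
      rwa [le_div_iff₀ (by linarith), one_mul]

lemma exp_neg_div_sub_le_one_sub_div {a x : ℝ} (ha : 0 ≤ a) (hax : a < x) :
    Real.exp (-(a / (x - a))) ≤ 1 - a / x := by
  have hx : 0 < x := by linarith
  have hxa : 0 < x - a := by linarith
  have h : 1 - a / x = (a / (x - a) + 1)⁻¹ := by field_simp; ring
  rw [Real.exp_neg, h]
  exact inv_anti₀ (by positivity) (Real.add_one_le_exp _)

lemma sq_nineteen_hundredths_le_one_sub_two_div_pow {μ : ℕ} (hμ : 3 ≤ μ) :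
    (0.19 : ℝ) ^ 2 ≤ (1 - 2 / (μ : ℝ)) ^ μ := by
  rcases lt_or_ge μ 6 with hμ6 | hμ6
  · interval_cases μ <;> norm_num
  have hμ' : (6 : ℝ) ≤ μ := by exact_mod_cast hμ6
  have hexp : 3 * -1 ≤ (μ : ℝ) * -(2 / ((μ : ℝ) - 2)) := by
    have : (μ : ℝ) * (2 / ((μ : ℝ) - 2)) ≤ 3 := by
      rw [mul_div_assoc', div_le_iff₀ (by linarith)]
      linarith
    linarith
  calc (0.19 : ℝ) ^ 2 ≤ 0.36787944116 ^ 3 := by norm_num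
    _ ≤ Real.exp (-1) ^ 3 := by gcongr; exact Real.exp_neg_one_gt_d9.le
    _ ≤ Real.exp (-(2 / ((μ : ℝ) - 2))) ^ μ := by
      rw [← Real.exp_nat_mul, ← Real.exp_nat_mul]
      exact Real.exp_le_exp.mpr (by exact_mod_cast hexp)
    _ ≤ (1 - 2 / (μ : ℝ)) ^ μ := by
      gcongr
      exact exp_neg_div_sub_le_one_sub_div (by norm_num) (by linarith)

/-- The population is identified with its ranks `Fin μ`, rank `0` having the highest diversity
contribution, so a tournament is a map `Fin μ → Fin μ` whose winner is the smallest drawn rank. -/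
theorem tournament_selection_good (μ : ℕ) (hμ : 3 ≤ μ)
    (G : Finset (Fin μ)) (hG : ∃ i ∈ G, (i : ℕ) < 3) :
    letI : Nonempty (Fin μ) := ⟨⟨0, by omega⟩⟩
    (ENNReal.ofReal ((1 - (1 - 1 / ((μ : ℝ) - 2)) ^ μ) * (1 - 2 / (μ : ℝ)) ^ μ) ≤
      ((PMF.uniformOfFintype (Fin μ → Fin μ)).map fun g =>
          (Finset.univ.image g).min.untopD ⟨0, by omega⟩).toOuterMeasure ↑G) ∧
    (1 - Real.exp (-1)) * (0.19 : ℝ) ^ 2 ≤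
      (1 - (1 - 1 / ((μ : ℝ) - 2)) ^ μ) * (1 - 2 / (μ : ℝ)) ^ μ := by
  have : Nonempty (Fin μ) := ⟨⟨0, by omega⟩⟩
  obtain ⟨i, hiG, hi3⟩ := hG
  have hμ' : (3 : ℝ) ≤ μ := by exact_mod_cast hμ
  have hwin := card_pow_sub_div_le_tournament_win (ι := Fin μ) ⟨0, by omega⟩
    (isLeast_compl_erase_top_three hi3) hiG
  rw [card_compl_erase_top_three hμ hi3, Fintype.card_fin] at hwin
  have hfirst : 1 - Real.exp (-1) ≤ 1 - (1 - 1 / ((μ : ℝ) - 2)) ^ μ :=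
    sub_le_sub_left (one_sub_inv_pow_le_exp_neg_one (by linarith) (by linarith)) 1
  have hexp : 0 ≤ 1 - Real.exp (-1) := by linarith [Real.exp_neg_one_lt_half]
  -- `convert` only reconciles the classical `DecidableEq (Fin μ)` used by `Finset.image` in `hwin`.
  exact ⟨(ofReal_tournament_bound_eq hμ).trans_le (by convert hwin),
    mul_le_mul hfirst (sq_nineteen_hundredths_le_one_sub_two_div_pow hμ) (by positivity)
      (hexp.trans hfirst)⟩

end EMO
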